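/- arXiv:math/0512563 — 2 statements merged into one kernel-verified Lean document; each statement's English description precedes it below -/
import Mathlib

section
/- For every c ∈ ℤ and t ∈ ℕ, the element [K,K̃;c;t] of D_v lies in the A-subalgebra D_A^0 of D_v generated by K, K⁻¹, K̃, K̃⁻¹ and the elements [K,K̃;t'] for all t' ∈ ℕ. -/
/-!
Write `a_c := q^c K - q^{-c} K̃⁻¹`, so that the `s`-th factor of `[K,K̃;c;t]` is
`a_{c-s+1} / (qˢ - q⁻ˢ)`. The `a_c` commute with each other because `K` and `K̃⁻¹` do, so raising
`c` by one drops the last factor and adds `a_{c+1}` in front: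
`[K,K̃;c+1;t+1] = [K,K̃;c;t] a_{c+1} / (q^{t+1} - q^{-t-1})`. Writing `a_{c+1}` as
`q^{t+1} a_{c-t}` plus a multiple of `K̃⁻¹`, or as `q^{-t-1} a_{c-t}` plus a multiple of `K`, gives
`[K,K̃;c+1;t+1] = q^{t+1} [K,K̃;c;t+1] + q^{t-c} [K,K̃;c;t] K̃⁻¹` and
`[K,K̃;c;t+1] = q^{t+1} [K,K̃;c+1;t+1] - q^{c+1} [K,K̃;c;t] K`,
whose coefficients lie in `ℤ[q, q⁻¹]`. Induction on `t`, and then on `c` in both directions from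
`c = 0`, puts every `[K,K̃;c;t]` into `D_A^0`.
-/

noncomputable section

/-- Generators of the quantum double `D_q`. -/
inductive DGen : Type
  | E | F | K | Kinv | Kt | Ktinv
  deriving DecidableEq

/-- The defining relations of `D_q`. -/
inductive DRel (k : Type) [Field k] (q : k) :
    FreeAlgebra k DGen → FreeAlgebra k DGen → Prop
  | KE : DRel k q (FreeAlgebra.ι k DGen.K * FreeAlgebra.ι k DGen.E)
      ((q ^ 2) • (FreeAlgebra.ι k DGen.E * FreeAlgebra.ι k DGen.K))
  | KF : DRel k q (FreeAlgebra.ι k DGen.K * FreeAlgebra.ι k DGen.F)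
      (((q ^ 2)⁻¹) • (FreeAlgebra.ι k DGen.F * FreeAlgebra.ι k DGen.K))
  | KtE : DRel k q (FreeAlgebra.ι k DGen.Kt * FreeAlgebra.ι k DGen.E)
      ((q ^ 2) • (FreeAlgebra.ι k DGen.E * FreeAlgebra.ι k DGen.Kt))
  | KtF : DRel k q (FreeAlgebra.ι k DGen.Kt * FreeAlgebra.ι k DGen.F)
      (((q ^ 2)⁻¹) • (FreeAlgebra.ι k DGen.F * FreeAlgebra.ι k DGen.Kt))
  | KKinv : DRel k q (FreeAlgebra.ι k DGen.K * FreeAlgebra.ι k DGen.Kinv) 1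
  | KinvK : DRel k q (FreeAlgebra.ι k DGen.Kinv * FreeAlgebra.ι k DGen.K) 1
  | KtKtinv : DRel k q (FreeAlgebra.ι k DGen.Kt * FreeAlgebra.ι k DGen.Ktinv) 1
  | KtinvKt : DRel k q (FreeAlgebra.ι k DGen.Ktinv * FreeAlgebra.ι k DGen.Kt) 1
  | KKt : DRel k q (FreeAlgebra.ι k DGen.K * FreeAlgebra.ι k DGen.Kt)
      (FreeAlgebra.ι k DGen.Kt * FreeAlgebra.ι k DGen.K)
  | EF : DRel k q (FreeAlgebra.ι k DGen.E * FreeAlgebra.ι k DGen.F)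
      (FreeAlgebra.ι k DGen.F * FreeAlgebra.ι k DGen.E +
        ((q - q⁻¹)⁻¹) • (FreeAlgebra.ι k DGen.K - FreeAlgebra.ι k DGen.Ktinv))

/-- The quantum double `D_q` of `U_q(sl2)^{≤0}`, presented by generators and relations. -/
abbrev Dq (k : Type) [Field k] (q : k) := RingQuot (DRel k q)

def DE (k : Type) [Field k] (q : k) : Dq k q :=
  RingQuot.mkAlgHom k (DRel k q) (FreeAlgebra.ι k DGen.E)
def DF (k : Type) [Field k] (q : k) : Dq k q :=
  RingQuot.mkAlgHom k (DRel k q) (FreeAlgebra.ι k DGen.F)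
def DK (k : Type) [Field k] (q : k) : Dq k q :=
  RingQuot.mkAlgHom k (DRel k q) (FreeAlgebra.ι k DGen.K)
def DKinv (k : Type) [Field k] (q : k) : Dq k q :=
  RingQuot.mkAlgHom k (DRel k q) (FreeAlgebra.ι k DGen.Kinv)
def DKt (k : Type) [Field k] (q : k) : Dq k q :=
  RingQuot.mkAlgHom k (DRel k q) (FreeAlgebra.ι k DGen.Kt)
def DKtinv (k : Type) [Field k] (q : k) : Dq k q :=
  RingQuot.mkAlgHom k (DRel k q) (FreeAlgebra.ι k DGen.Ktinv)

/-- The quantum integer `[n]_q = (qⁿ - q⁻ⁿ)/(q - q⁻¹)`. -/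
def qint (k : Type) [Field k] (q : k) (n : ℕ) : k := (q ^ n - q⁻¹ ^ n) / (q - q⁻¹)

/-- The quantum factorial `[n]_q!`. -/
def qfact (k : Type) [Field k] (q : k) : ℕ → k
  | 0 => 1
  | n + 1 => qfact k q n * qint k q (n + 1)

/-- The Gaussian binomial coefficient `[m choose n]_q`. -/
def qbinom (k : Type) [Field k] (q : k) (m n : ℕ) : k :=
  qfact k q m / (qfact k q n * qfact k q (m - n))

/-- The element `[K,K̃;c;t] = ∏_{s=1}^t (K q^{c-s+1} - K̃⁻¹ q^{-c+s-1})/(q^s - q^{-s})` of `D_q`. -/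
def KKtc (k : Type) [Field k] (q : k) (c : ℤ) : ℕ → Dq k q
  | 0 => 1
  | t + 1 =>
      KKtc k q c t *
        ((q ^ ((t : ℤ) + 1) - q ^ (-((t : ℤ) + 1)))⁻¹ •
          (q ^ (c - (t : ℤ)) • DK k q - q ^ ((t : ℤ) - c) • DKtinv k q))

/-- The field `ℚ(v)`, realized as the fraction field of `ℤ[v]`. -/
abbrev Qv : Type := FractionRing (Polynomial ℤ)

/-- The indeterminate `v ∈ ℚ(v)`. -/
def vv : Qv := algebraMap (Polynomial ℤ) Qv Polynomial.X

/-- The subring `A = ℤ[v, v⁻¹]` of `ℚ(v)`. -/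
def Asub : Subring Qv := Subring.closure {vv, vv⁻¹}

/-- The `A`-subalgebra `D_A^0` of `D_v` generated by `K^{±1}, K̃^{±1}` and all
`[K,K̃;t']`, realized as the subring generated by these elements together with
the scalars `a • 1`, `a ∈ A`. -/
def DA0 : Subring (Dq Qv vv) :=
  Subring.closure
    ((fun a : Qv => a • (1 : Dq Qv vv)) '' (Asub : Set Qv) ∪
      ({DK Qv vv, DKinv Qv vv, DKt Qv vv, DKtinv Qv vv} ∪
        {x | ∃ t' : ℕ, x = KKtc Qv vv 0 t'}))

section QuantumDouble

variable (k : Type) [Field k] (q : k)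

theorem DKt_mul_DKtinv : DKt k q * DKtinv k q = 1 := by
  simpa [DKt, DKtinv] using RingQuot.mkAlgHom_rel k (DRel.KtKtinv (k := k) (q := q))

theorem DKtinv_mul_DKt : DKtinv k q * DKt k q = 1 := by
  simpa [DKt, DKtinv] using RingQuot.mkAlgHom_rel k (DRel.KtinvKt (k := k) (q := q))

theorem DKt_commute_DK : Commute (DKt k q) (DK k q) := by
  have h := RingQuot.mkAlgHom_rel k (DRel.KKt (k := k) (q := q))
  rw [map_mul, map_mul] at h
  exact h.symm

theorem DKtinv_commute_DK : Commute (DKtinv k q) (DK k q) :=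
  let Kt : (Dq k q)ˣ := ⟨DKt k q, DKtinv k q, DKt_mul_DKtinv k q, DKtinv_mul_DKt k q⟩
  (DKt_commute_DK k q).units_inv_left (u := Kt)

def KKfactor (a : ℤ) : Dq k q := q ^ a • DK k q - q ^ (-a) • DKtinv k q

theorem KKtc_succ (c : ℤ) (t : ℕ) :
    KKtc k q c (t + 1) =
      KKtc k q c t * ((q ^ ((t : ℤ) + 1) - q ^ (-((t : ℤ) + 1)))⁻¹ • KKfactor k q (c - t)) := by
  rw [KKtc, KKfactor, neg_sub]

theorem KKfactor_commute (a b : ℤ) : Commute (KKfactor k q a) (KKfactor k q b) := by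
  have hKKt := DKtinv_commute_DK k q
  unfold KKfactor
  apply Commute.sub_left <;> apply Commute.smul_left <;>
    apply Commute.sub_right <;> apply Commute.smul_right
  exacts [Commute.refl _, hKKt.symm, hKKt, Commute.refl _]

theorem KKtc_add_one_succ (c : ℤ) (t : ℕ) :
    KKtc k q (c + 1) (t + 1) =
      (q ^ ((t : ℤ) + 1) - q ^ (-((t : ℤ) + 1)))⁻¹ • (KKtc k q c t * KKfactor k q (c + 1)) := by
  induction t with
  | zero => rw [KKtc_succ, KKtc, KKtc, one_mul, one_mul, Nat.cast_zero, sub_zero]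
  | succ t ih =>
    have hc : c + 1 - ((t + 1 : ℕ) : ℤ) = c - t := by push_cast; ring
    rw [KKtc_succ, ih, KKtc_succ, hc]
    simp only [smul_mul_assoc, mul_smul_comm, smul_smul, mul_assoc,
      (KKfactor_commute k q (c + 1) (c - t)).eq, mul_comm]

variable {k q}

theorem KKfactor_add_eq_DKtinv (hq : q ≠ 0) (a n : ℤ) :
    KKfactor k q (a + n) =
      q ^ n • KKfactor k q a + (q ^ (-a) * (q ^ n - q ^ (-n))) • DKtinv k q := by
  simp only [KKfactor, neg_add, zpow_add₀ hq, zpow_neg]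
  module

theorem KKfactor_add_eq_DK (hq : q ≠ 0) (a n : ℤ) :
    KKfactor k q (a + n) =
      q ^ (-n) • KKfactor k q a + (q ^ a * (q ^ n - q ^ (-n))) • DK k q := by
  simp only [KKfactor, neg_add, zpow_add₀ hq, zpow_neg]
  module

theorem KKtc_add_one_succ_eq_DKtinv (hq : q ≠ 0) (c : ℤ) (t : ℕ)
    (hd : q ^ ((t : ℤ) + 1) - q ^ (-((t : ℤ) + 1)) ≠ 0) :
    KKtc k q (c + 1) (t + 1) =
      q ^ ((t : ℤ) + 1) • KKtc k q c (t + 1) + q ^ ((t : ℤ) - c) • (KKtc k q c t * DKtinv k q) := by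
  have h := KKfactor_add_eq_DKtinv hq (c - t) (t + 1)
  rw [show c - t + (t + 1) = c + 1 by ring, neg_sub] at h
  rw [KKtc_add_one_succ, h, KKtc_succ]
  simp only [mul_add, mul_smul_comm]
  match_scalars
  · ring
  · field_simp

theorem KKtc_succ_eq_DK (hq : q ≠ 0) (c : ℤ) (t : ℕ)
    (hd : q ^ ((t : ℤ) + 1) - q ^ (-((t : ℤ) + 1)) ≠ 0) :
    KKtc k q c (t + 1) =
      q ^ ((t : ℤ) + 1) • KKtc k q (c + 1) (t + 1) - q ^ (c + 1) • (KKtc k q c t * DK k q) := by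
  have h := KKfactor_add_eq_DK hq (c - t) (t + 1)
  rw [show c - t + (t + 1) = c + 1 by ring] at h
  rw [KKtc_add_one_succ, h, KKtc_succ]
  simp only [mul_add, mul_smul_comm]
  match_scalars
  · field_simp
    rw [← zpow_add₀ hq, add_neg_cancel, zpow_zero]
  · field_simp
    rw [← zpow_add₀ hq]
    ring_nf

theorem zpow_natCast_sub_zpow_neg_ne_zero (hq₀ : q ≠ 0) (hq : ¬IsOfFinOrder q) {n : ℕ}
    (hn : n ≠ 0) : q ^ (n : ℤ) - q ^ (-(n : ℤ)) ≠ 0 := by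
  intro h
  have hinv : q ^ n = (q ^ n)⁻¹ := by rwa [sub_eq_zero, zpow_neg, zpow_natCast] at h
  refine hq (isOfFinOrder_iff_pow_eq_one.mpr ⟨2 * n, by omega, ?_⟩)
  rw [two_mul, pow_add]
  nth_rewrite 2 [hinv]
  exact mul_inv_cancel₀ (pow_ne_zero n hq₀)

theorem KKtc_mem_of_mem (hq₀ : q ≠ 0) (hq : ¬IsOfFinOrder q) {S : Subring (Dq k q)}
    (hscalar : ∀ n : ℤ, q ^ n • (1 : Dq k q) ∈ S) (hK : DK k q ∈ S) (hKtinv : DKtinv k q ∈ S)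
    (hS : ∀ t, KKtc k q 0 t ∈ S) (c : ℤ) (t : ℕ) : KKtc k q c t ∈ S := by
  have hsmul (n : ℤ) {x : Dq k q} (hx : x ∈ S) : q ^ n • x ∈ S := by
    rw [← smul_one_mul]
    exact mul_mem (hscalar n) hx
  induction t generalizing c with
  | zero => exact one_mem S
  | succ t ih =>
    have hd : q ^ ((t : ℤ) + 1) - q ^ (-((t : ℤ) + 1)) ≠ 0 := by
      exact_mod_cast zpow_natCast_sub_zpow_neg_ne_zero hq₀ hq t.succ_ne_zero
    induction c using Int.induction_on with
    | zero => exact hS _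
    | succ i hi =>
      rw [KKtc_add_one_succ_eq_DKtinv hq₀ _ _ hd]
      exact add_mem (hsmul _ hi) (hsmul _ (mul_mem (ih _) hKtinv))
    | pred i hi =>
      rw [KKtc_succ_eq_DK hq₀ _ _ hd, sub_add_cancel]
      exact sub_mem (hsmul _ hi) (hsmul _ (mul_mem (ih _) hK))

end QuantumDouble

theorem vv_ne_zero : vv ≠ 0 :=
  (map_ne_zero_iff _ (IsFractionRing.injective (Polynomial ℤ) Qv)).mpr Polynomial.X_ne_zero

theorem vv_not_isOfFinOrder : ¬IsOfFinOrder vv := by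
  rintro hfin
  obtain ⟨n, hn, h⟩ := isOfFinOrder_iff_pow_eq_one.mp hfin
  have hX : (Polynomial.X ^ n : Polynomial ℤ) = 1 :=
    IsFractionRing.injective (Polynomial ℤ) Qv (by simpa [vv] using h)
  simpa [hn.ne'] using congrArg Polynomial.natDegree hX

theorem vv_zpow_mem_Asub (n : ℤ) : vv ^ n ∈ Asub := by
  have hv : vv ∈ Asub := Subring.subset_closure (by simp)
  have hvinv : vv⁻¹ ∈ Asub := Subring.subset_closure (by simp)
  obtain ⟨m, rfl | rfl⟩ := Int.eq_nat_or_neg n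
  · simpa using pow_mem hv m
  · simpa using pow_mem hvinv m

/-- for every `c : ℤ` and `t : ℕ`, the element `[K,K̃;c;t]` of `D_v`
lies in the `A`-subalgebra `D_A^0`. -/
theorem KKtc_mem_DA0 (c : ℤ) (t : ℕ) : KKtc Qv vv c t ∈ DA0 := by
  refine KKtc_mem_of_mem vv_ne_zero vv_not_isOfFinOrder ?_ ?_ ?_ ?_ c t <;>
    intros <;> apply Subring.subset_closure
  · exact Or.inl ⟨_, vv_zpow_mem_Asub _, rfl⟩
  · simp
  · simp
  · exact Or.inr (Or.inr ⟨_, rfl⟩)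
end
end

section
/- For all integers t ≥ 1 and t' ≥ 0, one has [t+t' choose t]_q · [K,K̃;t+t'] = Σ_{j=0}^{t'} (−1)^j · q^{t(t'−j)} · [t+j−1 choose j]_q · K^{j} · [K,K̃;t] · [K,K̃;t'−j] in D_q. -/
noncomputable section

/-!
Because `K` commutes with `K̃⁻¹`, `[K,K̃;t]` is a product `B₀ ⋯ B_{t-1}` of commuting factors
with `[s+1] B_s = (q⁻ˢ K - qˢ K̃⁻¹)/(q - q⁻¹)`, and these satisfy
`[n+m+1] B_{n+m} = qⁿ [m+1] B_m - q⁻ᵐ [n] K`.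
Induct on `t'`: multiply the identity for `t'` by `[t+t'+1] B_{t+t'}` and split this factor with
`n = t+j`, `m = t'-j` in the `j`-th term. The q-Pascal rules `[j+m] = qʲ[m] + q⁻ᵐ[j]` and
`[j+1]·[t+j choose j+1] = [t+j]·[t+j-1 choose j]` identify the result with `[t'+1]` times the
identity for `t'+1`.
-/

open Finset

section QuantumIntegers

variable {k : Type} [Field k] {q : k}

lemma pow_sub_inv_pow_ne_zero (hq0 : q ≠ 0) {n : ℕ} (hn : q ^ (2 * n) ≠ 1) :
    q ^ n - q⁻¹ ^ n ≠ 0 := by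
  rw [sub_ne_zero]
  contrapose! hn
  calc q ^ (2 * n) = q ^ n * q ^ n := by ring
    _ = (q * q⁻¹) ^ n := by rw [mul_pow, ← hn]
    _ = 1 := by rw [mul_inv_cancel₀ hq0, one_pow]

lemma qint_zero : qint k q 0 = 0 := by simp [qint]

lemma qint_add (a b : ℕ) : qint k q (a + b) = q ^ a * qint k q b + q⁻¹ ^ b * qint k q a := by
  simp only [qint, pow_add]
  ring

variable (hq0 : q ≠ 0) (hq : ∀ n : ℕ, 0 < n → q ^ n ≠ 1)
include hq0 hq

lemma qint_ne_zero {n : ℕ} (hn : n ≠ 0) : qint k q n ≠ 0 := by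
  have h1 : q - q⁻¹ ≠ 0 := by simpa using pow_sub_inv_pow_ne_zero hq0 (n := 1) (hq 2 two_pos)
  exact div_ne_zero (pow_sub_inv_pow_ne_zero hq0 (hq _ (by omega))) h1

lemma qfact_ne_zero : ∀ n, qfact k q n ≠ 0
  | 0 => one_ne_zero
  | n + 1 => mul_ne_zero (qfact_ne_zero n) (qint_ne_zero hq0 hq n.succ_ne_zero)

lemma qbinom_zero_right (n : ℕ) : qbinom k q n 0 = 1 := by
  simp [qbinom, qfact, qfact_ne_zero hq0 hq]

lemma qbinom_self (n : ℕ) : qbinom k q n n = 1 := by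
  simp [qbinom, qfact, qfact_ne_zero hq0 hq]

lemma qint_succ_mul_qbinom (n j : ℕ) :
    qint k q (n + 1) * qbinom k q n j = qbinom k q (n + 1) (j + 1) * qint k q (j + 1) := by
  have hfact := qfact_ne_zero hq0 hq
  have hint := qint_ne_zero hq0 hq j.succ_ne_zero
  simp only [qbinom, qfact, Nat.add_sub_add_right]
  field_simp

lemma qbinom_add_mul_qint_succ (a b : ℕ) :
    qbinom k q (a + b) a * qint k q (a + b + 1) = qbinom k q (a + b + 1) a * qint k q (b + 1) := by
  have hfact := qfact_ne_zero hq0 hq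
  have hint := qint_ne_zero hq0 hq b.succ_ne_zero
  simp only [qbinom, Nat.add_sub_cancel_left, show a + b + 1 - a = b + 1 by omega, qfact]
  field_simp

end QuantumIntegers

lemma qint_smul_sum_antidiagonal_succ {k : Type} {M : Type*} [Field k] [AddCommGroup M] [Module k M]
    (q : k) (c : ℕ × ℕ → k) (T : ℕ × ℕ → M) (m : ℕ) :
    qint k q (m + 1) • ∑ p ∈ antidiagonal (m + 1), c p • T p =
      ∑ p ∈ antidiagonal m,
          (q ^ p.1 * qint k q (p.2 + 1) * c (p.1, p.2 + 1)) • T (p.1, p.2 + 1) +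
        ∑ p ∈ antidiagonal m,
          (q⁻¹ ^ p.2 * qint k q (p.1 + 1) * c (p.1 + 1, p.2)) • T (p.1 + 1, p.2) := by
  have split : qint k q (m + 1) • ∑ p ∈ antidiagonal (m + 1), c p • T p =
      ∑ p ∈ antidiagonal (m + 1), (q ^ p.1 * qint k q p.2 * c p) • T p +
        ∑ p ∈ antidiagonal (m + 1), (q⁻¹ ^ p.2 * qint k q p.1 * c p) • T p := by
    rw [smul_sum, ← sum_add_distrib]
    refine sum_congr rfl fun p hp => ?_
    rw [← HasAntidiagonal.mem_antidiagonal.mp hp, smul_smul, ← add_smul, qint_add, add_mul]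
  rw [split, Finset.Nat.sum_antidiagonal_succ', Finset.Nat.sum_antidiagonal_succ]
  simp [qint_zero]

section QBracket

variable {k : Type} [Field k] (q : k) {R : Type*} [Ring R] [Algebra k R] (x y : R)

def qBracketFactor (s : ℕ) : R :=
  (q ^ (s + 1) - q⁻¹ ^ (s + 1))⁻¹ • (q⁻¹ ^ s • x - q ^ s • y)

def qBracket : ℕ → R
  | 0 => 1
  | n + 1 => qBracket n * qBracketFactor q x y n

-- The sum is over `(j, t' - j)` in the antidiagonal of `t'`, which avoids truncated subtraction.
def qBracketExpansion (t m : ℕ) : R :=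
  ∑ p ∈ antidiagonal m, ((-1) ^ p.1 * q ^ (t * p.2) * qbinom k q (t + p.1 - 1) p.1) •
    (x ^ p.1 * qBracket q x y t * qBracket q x y p.2)

variable {q x y}

lemma Commute.qBracket_right (h : Commute x y) : ∀ n, Commute x (qBracket q x y n)
  | 0 => Commute.one_right x
  | n + 1 => (h.qBracket_right n).mul_right <|
      (((Commute.refl x).smul_right _).sub_right (h.smul_right _)).smul_right _

variable (hq0 : q ≠ 0) (hq : ∀ n : ℕ, 0 < n → q ^ n ≠ 1)
include hq0 hq

lemma qint_succ_smul_qBracketFactor (s : ℕ) :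
    qint k q (s + 1) • qBracketFactor q x y s = (q - q⁻¹)⁻¹ • (q⁻¹ ^ s • x - q ^ s • y) := by
  have := pow_sub_inv_pow_ne_zero hq0 (hq (2 * (s + 1)) (by omega))
  rw [qBracketFactor, smul_smul, qint, div_eq_mul_inv, mul_right_comm, mul_inv_cancel₀ this,
    one_mul]

lemma qint_smul_qBracketFactor_add (n m : ℕ) :
    qint k q (n + m + 1) • qBracketFactor q x y (n + m) =
      (q ^ n * qint k q (m + 1)) • qBracketFactor q x y m - (q⁻¹ ^ m * qint k q n) • x := by
  rw [qint_succ_smul_qBracketFactor hq0 hq, mul_smul, qint_succ_smul_qBracketFactor hq0 hq, qint,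
    div_eq_mul_inv]
  match_scalars <;> ring

lemma monomial_mul_qint_smul_qBracketFactor (h : Commute x y) (t j m : ℕ) :
    x ^ j * qBracket q x y t * qBracket q x y m *
        (qint k q (t + j + m + 1) • qBracketFactor q x y (t + j + m)) =
      (q ^ (t + j) * qint k q (m + 1)) • (x ^ j * qBracket q x y t * qBracket q x y (m + 1)) -
        (q⁻¹ ^ m * qint k q (t + j)) • (x ^ (j + 1) * qBracket q x y t * qBracket q x y m) := by
  have hx : Commute x (qBracket q x y t * qBracket q x y m) :=
    (h.qBracket_right t).mul_right (h.qBracket_right m)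
  have shift_x : x ^ j * qBracket q x y t * qBracket q x y m * x =
      x ^ (j + 1) * qBracket q x y t * qBracket q x y m := by
    simp only [mul_assoc, pow_succ]
    rw [← mul_assoc (qBracket q x y t), ← hx.eq]
  rw [qint_smul_qBracketFactor_add hq0 hq, mul_sub, mul_smul_comm, mul_smul_comm, shift_x,
    qBracket, mul_assoc _ (qBracket q x y m)]

lemma qBracketExpansion_mul {t : ℕ} (ht : 1 ≤ t) (h : Commute x y) (m : ℕ) :
    qBracketExpansion q x y t m * (qint k q (t + m + 1) • qBracketFactor q x y (t + m)) =
      qint k q (m + 1) • qBracketExpansion q x y t (m + 1) := by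
  have pascal (j : ℕ) : qint k q (j + 1) * qbinom k q (t + (j + 1) - 1) (j + 1) =
      qint k q (t + j) * qbinom k q (t + j - 1) j := by
    have := qint_succ_mul_qbinom hq0 hq (t + j - 1) j
    rw [show t + j - 1 + 1 = t + j by omega] at this
    rw [show t + (j + 1) - 1 = t + j by omega, this, mul_comm]
  simp only [qBracketExpansion]
  rw [qint_smul_sum_antidiagonal_succ, ← sum_add_distrib, sum_mul]
  refine sum_congr rfl fun p hp => ?_
  rw [← HasAntidiagonal.mem_antidiagonal.mp hp, ← add_assoc, smul_mul_assoc,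
    monomial_mul_qint_smul_qBracketFactor hq0 hq h, smul_sub, smul_smul, smul_smul,
    sub_eq_add_neg, ← neg_smul]
  congr 2
  · ring
  · linear_combination (-1) ^ p.1 * q ^ (t * p.2) * q⁻¹ ^ p.2 * pascal p.1

theorem qbinom_smul_qBracket_add {t : ℕ} (ht : 1 ≤ t) (h : Commute x y) (m : ℕ) :
    qbinom k q (t + m) t • qBracket q x y (t + m) = qBracketExpansion q x y t m := by
  induction m with
  | zero => simp [qBracketExpansion, qBracket, qbinom_self hq0 hq, qbinom_zero_right hq0 hq]
  | succ m ih =>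
    apply smul_right_injective R (qint_ne_zero hq0 hq m.add_one_ne_zero)
    dsimp only
    rw [← qBracketExpansion_mul hq0 hq ht h, ← ih, smul_mul_smul, ← add_assoc,
      qbinom_add_mul_qint_succ hq0 hq, smul_smul, mul_comm, qBracket]

end QBracket

section QuantumDouble

variable {k : Type} [Field k] {q : k}

lemma commute_DK_DKtinv : Commute (DK k q) (DKtinv k q) := by
  have rel {a b} (h : DRel k q a b) : RingQuot.mkAlgHom k (DRel k q) a = RingQuot.mkAlgHom k _ b :=
    RingQuot.mkAlgHom_rel k h
  let Kt : (Dq k q)ˣ :=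
    ⟨DKt k q, DKtinv k q, by simpa [DKt, DKtinv] using rel DRel.KtKtinv,
      by simpa [DKt, DKtinv] using rel DRel.KtinvKt⟩
  have hK : Commute (DK k q) Kt := by
    change DK k q * DKt k q = DKt k q * DK k q
    simpa [DK, DKt] using rel DRel.KKt
  exact hK.units_inv_right

lemma KKtc_zero_eq_qBracket : ∀ n, KKtc k q 0 n = qBracket q (DK k q) (DKtinv k q) n
  | 0 => rfl
  | n + 1 => by
    rw [KKtc, KKtc_zero_eq_qBracket n, qBracket, qBracketFactor]
    simp only [← Nat.cast_succ, zero_sub, sub_zero, zpow_neg, zpow_natCast, inv_pow]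

end QuantumDouble

/-- for `t ≥ 1` and `t' ≥ 0`,
`[t+t' choose t]_q·[K,K̃;t+t'] = Σ_{j=0}^{t'} (−1)^j·q^{t(t'−j)}·[t+j−1 choose j]_q·K^j·[K,K̃;t]·[K,K̃;t'−j]`. -/
theorem qbinom_KKtc_product (k : Type) [Field k] (q : k)
    (hq0 : q ≠ 0) (hq : ∀ n : ℕ, 0 < n → q ^ n ≠ 1)
    (t t' : ℕ) (ht : 1 ≤ t) :
    (qbinom k q (t + t') t) • KKtc k q 0 (t + t') =
      ∑ j ∈ Finset.range (t' + 1),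
        ((-1 : k) ^ j * q ^ (t * (t' - j)) * qbinom k q (t + j - 1) j) •
          (DK k q ^ j * KKtc k q 0 t * KKtc k q 0 (t' - j)) := by
  simp only [KKtc_zero_eq_qBracket]
  rw [qbinom_smul_qBracket_add hq0 hq ht commute_DK_DKtinv, qBracketExpansion]
  exact Finset.Nat.sum_antidiagonal_eq_sum_range_succ_mk _ t'
end
end
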